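/- Let S be an optimal feasible synchronized schedule that executes jobs j_1,…,j_k with processing times p_1,…,p_k and weights w_1,…,w_k on some shared processor in this order. Then 0 = T_1 < T_2 < ⋯ < T_{k+1}, and W_{−1} ≥ W_0 ≥ W_1 ≥ ⋯ ≥ W_{k−2}. -/
import Mathlib


/-- Start times on a shared processor for a sequence of processing times `q`:
`Tseq q 0 = 0` and `Tseq q (i+1) = (Tseq q i + q_i)/2`; job `i` (0-indexed)
occupies the shared processor during `(Tseq q i, Tseq q (i+1))`. -/
noncomputable def Tseq (q : List ℝ) : ℕ → ℝ
  | 0 => 0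
  | i + 1 => (Tseq q i + q.getD i 0) / 2

/-- A sequence of processing times is feasible on a shared processor if every
job is long enough: `q_i > T_i`. -/
def ListFeasible (q : List ℝ) : Prop :=
  ∀ i < q.length, Tseq q i < q.getD i 0

/-- Total weighted overlap of one shared processor executing jobs with
processing times `q` and weights `v` (in this order): the overlap of the `i`-th
job is `(q_i - T_i)/2`. -/
noncomputable def listOverlap (q v : List ℝ) : ℝ :=
  ∑ i ∈ Finset.range q.length, v.getD i 0 * (q.getD i 0 - Tseq q i) / 2

/-- A synchronized schedule: each of the `m` shared processors gets a finite
sequence of distinct jobs, and each job appears on at most one shared processor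
(jobs appearing nowhere execute on their private processors only). -/
structure SyncSchedule (J : Type) (m : ℕ) where
  seq : Fin m → List J
  nodup : ∀ i, (seq i).Nodup
  disj : ∀ i i' j, j ∈ seq i → j ∈ seq i' → i = i'

namespace SyncSchedule

variable {J : Type} {m : ℕ}

/-- Feasibility of a synchronized schedule for processing times `p`. -/
def Feasible (p : J → ℝ) (S : SyncSchedule J m) : Prop :=
  ∀ i, ListFeasible ((S.seq i).map p)

/-- Total weighted overlap of a synchronized schedule. -/
noncomputable def Omega (p w : J → ℝ) (S : SyncSchedule J m) : ℝ :=
  ∑ i, listOverlap ((S.seq i).map p) ((S.seq i).map w)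

/-- A feasible synchronized schedule is optimal if it maximizes the total
weighted overlap among all feasible synchronized schedules. -/
def Optimal (p w : J → ℝ) (S : SyncSchedule J m) : Prop :=
  S.Feasible p ∧ ∀ S' : SyncSchedule J m, S'.Feasible p → S'.Omega p w ≤ S.Omega p w

end SyncSchedule

lemma Tseq_succ (q : List ℝ) (i : ℕ) : Tseq q (i+1) = (Tseq q i + q.getD i 0) / 2 := rfl

lemma Tseq_congr (q q' : List ℝ) : ∀ i, (∀ l, l < i → q.getD l 0 = q'.getD l 0) → Tseq q i = Tseq q' i
  | 0, _ => rfl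
  | i+1, h => by
    rw [Tseq_succ, Tseq_succ, Tseq_congr q q' i (fun l hl => h l (Nat.lt_succ_of_lt hl)),
      h i (Nat.lt_succ_self i)]

lemma getD_eraseIdx_lt (q : List ℝ) (j i : ℕ) (h : i < j) :
    (q.eraseIdx j).getD i 0 = q.getD i 0 := by
  simp [List.getD_eq_getElem?_getD, List.getElem?_eraseIdx, h]

lemma getD_eraseIdx_ge (q : List ℝ) (j i : ℕ) (h : j ≤ i) :
    (q.eraseIdx j).getD i 0 = q.getD (i+1) 0 := by
  simp [List.getD_eq_getElem?_getD, List.getElem?_eraseIdx, Nat.not_lt.mpr h]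

lemma Tseq_eraseIdx (q : List ℝ) (j : ℕ) :
    ∀ t, Tseq (q.eraseIdx j) (j + t) = Tseq q (j + t + 1) - (q.getD j 0 - Tseq q j) / 2 ^ (t + 1)
  | 0 => by
    have h0 : Tseq (q.eraseIdx j) j = Tseq q j :=
      Tseq_congr _ _ j (fun l hl => getD_eraseIdx_lt q j l hl)
    rw [Nat.add_zero, h0, Tseq_succ]; ring
  | t+1 => by
    have ih := Tseq_eraseIdx q j t
    rw [show j + (t+1) = (j + t) + 1 from rfl, Tseq_succ, Tseq_succ, ih,
      getD_eraseIdx_ge q j (j+t) (Nat.le_add_right _ _)]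
    ring

lemma map_eraseIdx {J : Type} (f : J → ℝ) : ∀ (l : List J) (j : ℕ),
    (l.eraseIdx j).map f = (l.map f).eraseIdx j
  | [], _ => rfl
  | _ :: _, 0 => rfl
  | a :: l, j+1 => by simp [List.eraseIdx, map_eraseIdx f l j]


lemma listFeasible_eraseIdx (q : List ℝ) (hf : ListFeasible q) (j : ℕ) (hj : j < q.length) :
    ListFeasible (q.eraseIdx j) := by
  intro i hi
  have hlen : (q.eraseIdx j).length = q.length - 1 := by
    rw [List.length_eraseIdx_of_lt (by omega)]
  rcases lt_or_ge i j with h | h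
  · rw [getD_eraseIdx_lt q j i h,
      Tseq_congr (q.eraseIdx j) q i (fun l hl => getD_eraseIdx_lt q j l (hl.trans h))]
    exact hf i (by omega)
  · obtain ⟨t, rfl⟩ : ∃ t, i = j + t := ⟨i - j, by omega⟩
    rw [getD_eraseIdx_ge q j (j+t) (Nat.le_add_right _ _), Tseq_eraseIdx q j t]
    have h1 := hf (j+t+1) (by omega)
    have h2 := hf j hj
    have h3 : (0:ℝ) < 2 ^ (t+1) := by positivity
    have h4 : 0 < (q.getD j 0 - Tseq q j) / 2 ^ (t+1) := div_pos (by linarith) h3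
    linarith

def eraseSched {J : Type} {m : ℕ} (S : SyncSchedule J m) (r : Fin m) (j : ℕ) :
    SyncSchedule J m where
  seq i := if i = r then (S.seq r).eraseIdx j else S.seq i
  nodup i := by
    split
    · exact (List.eraseIdx_sublist _ j).nodup (S.nodup r)
    · exact S.nodup i
  disj i i' x h h' := by
    have mem : ∀ b, x ∈ (if b = r then (S.seq r).eraseIdx j else S.seq b) → x ∈ S.seq b := by
      intro b hb
      split at hb
      · subst ‹b = r›; exact (List.eraseIdx_sublist _ j).subset hb
      · exact hb
    exact S.disj i i' x (mem i h) (mem i' h')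

lemma omega_erase_diff {J : Type} [Fintype J] {m : ℕ} (p w : J → ℝ)
    (S : SyncSchedule J m) (r : Fin m) (j : ℕ) :
    S.Omega p w - (eraseSched S r j).Omega p w =
      listOverlap ((S.seq r).map p) ((S.seq r).map w) -
        listOverlap (((S.seq r).map p).eraseIdx j) (((S.seq r).map w).eraseIdx j) := by
  unfold SyncSchedule.Omega
  rw [← Finset.sum_sub_distrib, Finset.sum_eq_single r]
  · simp [eraseSched, map_eraseIdx]
  · intro b _ hb; simp [eraseSched, hb]
  · intro h; exact absurd (Finset.mem_univ r) h

lemma overlap_erase_formula (q v : List ℝ) (k j : ℕ) (hq : q.length = k) (hj : j + 1 < k) :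
    listOverlap q v - listOverlap (q.eraseIdx j) (v.eraseIdx j)
      = v.getD j 0 / 2 * (q.getD j 0 - Tseq q j)
        - (∑ t ∈ Finset.range (k - 1 - j), v.getD (j+t+1) 0 / 2 ^ (t+2)) *
            (q.getD j 0 - Tseq q j) := by
  set D := q.getD j 0 - Tseq q j with hD
  set F : ℕ → ℝ := fun i => v.getD i 0 * (q.getD i 0 - Tseq q i) / 2 with hF
  set G : ℕ → ℝ := fun i =>
    (v.eraseIdx j).getD i 0 * ((q.eraseIdx j).getD i 0 - Tseq (q.eraseIdx j) i) / 2 with hG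
  set n := k - 1 - j with hn
  have hlen' : (q.eraseIdx j).length = k - 1 := by
    rw [List.length_eraseIdx_of_lt (by omega), hq]
  have e1 : listOverlap q v
      = (∑ i ∈ Finset.range j, F i) + F j + ∑ t ∈ Finset.range n, F (j+t+1) := by
    rw [listOverlap, hq, ← Finset.sum_range_add_sum_Ico F (show j+1 ≤ k by omega),
      Finset.sum_range_succ, Finset.sum_Ico_eq_sum_range]
    rw [show k - (j+1) = n by omega]
    refine congrArg _ (Finset.sum_congr rfl fun t _ => ?_)
    rw [show j + 1 + t = j + t + 1 by omega]
  have e2 : listOverlap (q.eraseIdx j) (v.eraseIdx j)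
      = (∑ i ∈ Finset.range j, F i) + (∑ t ∈ Finset.range n, F (j+t+1))
        + ∑ t ∈ Finset.range n, v.getD (j+t+1) 0 / 2 ^ (t+2) * D := by
    rw [listOverlap, hlen', ← Finset.sum_range_add_sum_Ico G (show j ≤ k-1 by omega),
      Finset.sum_Ico_eq_sum_range, show k - 1 - j = n from rfl]
    have hGF : ∀ i ∈ Finset.range j, G i = F i := by
      intro i hi
      have hij : i < j := Finset.mem_range.mp hi
      rw [hG, hF]
      dsimp only
      rw [getD_eraseIdx_lt v j i hij, getD_eraseIdx_lt q j i hij,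
        Tseq_congr (q.eraseIdx j) q i (fun l hl => getD_eraseIdx_lt q j l (hl.trans hij))]
    have hGsplit : ∀ t, G (j+t) = F (j+t+1) + v.getD (j+t+1) 0 / 2 ^ (t+2) * D := by
      intro t
      rw [hG, hF]
      dsimp only
      rw [getD_eraseIdx_ge v j (j+t) (Nat.le_add_right _ _),
        getD_eraseIdx_ge q j (j+t) (Nat.le_add_right _ _), Tseq_eraseIdx q j t, hD]
      ring
    rw [Finset.sum_congr rfl hGF, Finset.sum_congr rfl (fun t _ => hGsplit t),
      Finset.sum_add_distrib, add_assoc]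
  rw [e1, e2, hF, Finset.sum_mul]
  dsimp only
  ring

/-- If an optimal feasible synchronized schedule executes jobs
`js = [j_1, …, j_k]` (0-indexed) on some shared processor in this order, then
`0 = T_1 < T_2 < ⋯ < T_{k+1}` and `W_{-1} ≥ W_0 ≥ ⋯ ≥ W_{k-2}`, where (in the
0-indexed form used here) `T_{i+1} = Tseq q i` and
`W_{j-1} = Σ_{ℓ=j}^{k-1} w_{js ℓ} / 2^(ℓ+1-j)` for `j ∈ {0, …, k-1}`. -/
theorem T_strict_mono_and_W_antitone_of_optimal
    {J : Type} [Fintype J] [DecidableEq J] {m : ℕ} (hm : 1 ≤ m)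
    (p w : J → ℝ) (hp : ∀ j, 0 < p j) (hw : ∀ j, 0 < w j)
    (S : SyncSchedule J m) (hopt : S.Optimal p w)
    (r : Fin m) (k : ℕ) (hk : (S.seq r).length = k) :
    Tseq ((S.seq r).map p) 0 = 0 ∧
    (∀ i < k, Tseq ((S.seq r).map p) i < Tseq ((S.seq r).map p) (i + 1)) ∧
    (∀ j, j + 1 < k →
      ∑ ℓ ∈ Finset.Ico (j + 1) k, ((S.seq r).map w).getD ℓ 0 / 2 ^ (ℓ + 1 - (j + 1))
        ≤ ∑ ℓ ∈ Finset.Ico j k, ((S.seq r).map w).getD ℓ 0 / 2 ^ (ℓ + 1 - j)) := by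
  set q : List ℝ := (S.seq r).map p with hqdef
  set v : List ℝ := (S.seq r).map w with hvdef
  have hqlen : q.length = k := by rw [hqdef, List.length_map, hk]
  have hfeas : ListFeasible q := hopt.1 r
  refine ⟨rfl, fun i hi => ?_, fun j hj => ?_⟩
  · have := hfeas i (by omega)
    rw [Tseq_succ]; linarith
  · -- key inequality from optimality, deleting job j
    set n := k - 1 - j with hn
    have hDpos : 0 < q.getD j 0 - Tseq q j := by
      have := hfeas j (by omega); linarith
    have hfeas' : (eraseSched S r j).Feasible p := by
      intro i
      show ListFeasible ((if i = r then (S.seq r).eraseIdx j else S.seq i).map p)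
      split
      · rw [map_eraseIdx]
        exact listFeasible_eraseIdx q hfeas j (by omega)
      · exact hopt.1 i
    have hle := hopt.2 _ hfeas'
    have hdiff := omega_erase_diff p w S r j
    have hform := overlap_erase_formula q v k j hqlen hj
    have key : ∑ t ∈ Finset.range n, v.getD (j+t+1) 0 / 2 ^ (t+2) ≤ v.getD j 0 / 2 := by
      have h0 : 0 ≤ v.getD j 0 / 2 * (q.getD j 0 - Tseq q j)
          - (∑ t ∈ Finset.range n, v.getD (j+t+1) 0 / 2 ^ (t+2)) * (q.getD j 0 - Tseq q j) := by
        rw [← hform]; rw [← hqdef, ← hvdef] at hdiff; linarith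
      nlinarith [h0, hDpos]
    -- rewrite target sums
    have eL : ∑ ℓ ∈ Finset.Ico (j + 1) k, v.getD ℓ 0 / 2 ^ (ℓ + 1 - (j + 1))
        = ∑ t ∈ Finset.range n, v.getD (j+t+1) 0 / 2 ^ (t+1) := by
      rw [Finset.sum_Ico_eq_sum_range, show k - (j+1) = n by omega]
      refine Finset.sum_congr rfl fun t _ => ?_
      rw [show j + 1 + t = j + t + 1 by omega, show j + t + 1 + 1 - (j+1) = t + 1 by omega]
    have eR : ∑ ℓ ∈ Finset.Ico j k, v.getD ℓ 0 / 2 ^ (ℓ + 1 - j)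
        = (∑ t ∈ Finset.range n, v.getD (j+t+1) 0 / 2 ^ (t+2)) + v.getD j 0 / 2 := by
      rw [Finset.sum_Ico_eq_sum_range, show k - j = n + 1 by omega, Finset.sum_range_succ']
      congr 1
      · refine Finset.sum_congr rfl fun t _ => ?_
        rw [show j + (t + 1) = j + t + 1 by omega, show j + t + 1 + 1 - j = t + 2 by omega]
      · rw [Nat.add_zero, show j + 1 - j = 1 by omega, pow_one]
    rw [eL, eR]
    have e2 : ∑ t ∈ Finset.range n, v.getD (j+t+1) 0 / 2 ^ (t+1)
        = 2 * ∑ t ∈ Finset.range n, v.getD (j+t+1) 0 / 2 ^ (t+2) := by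
      rw [Finset.mul_sum]
      refine Finset.sum_congr rfl fun t _ => ?_
      rw [pow_succ]
      ring
    rw [e2]
    linarith
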